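/- arXiv:2204.11796 — 3 statements merged into one kernel-verified Lean document; each statement's English description precedes it below -/
import Mathlib

section
/- If Z is a random element of the n-torus (𝕊¹)ⁿ whose law is absolutely continuous with respect to Haar measure, then Zᵐ converges in distribution as m → ∞ to a Haar-distributed element of (𝕊¹)ⁿ. -/
open MeasureTheory Filter Topology

noncomputable instance : MeasurableSpace Circle := borel Circle
instance : BorelSpace Circle := ⟨rfl⟩

open Pointwise

namespace TorusPowerAux

variable {n : ℕ}

noncomputable def chi (k : Fin n → ℤ) : C(Fin n → Circle, ℂ) where
  toFun z := ∏ j, ((z j ^ k j : Circle) : ℂ)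
  continuous_toFun := by
    apply continuous_finset_prod
    intro j _
    exact continuous_subtype_val.comp ((continuous_zpow (k j) : Continuous fun z : Circle => z ^ k j).comp (continuous_apply j))

lemma chi_apply (k : Fin n → ℤ) (z : Fin n → Circle) :
    chi k z = ∏ j, ((z j ^ k j : Circle) : ℂ) := rfl

lemma norm_chi (k : Fin n → ℤ) (z : Fin n → Circle) : ‖chi k z‖ = 1 := by
  simp [chi_apply, norm_prod, Circle.norm_coe]

lemma chi_zero : (chi (0 : Fin n → ℤ)) = 1 := by
  ext z; simp [chi_apply]

lemma chi_add_apply (k l : Fin n → ℤ) (z : Fin n → Circle) :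
    chi (k + l) z = chi k z * chi l z := by
  simp [chi_apply, zpow_add, ← Finset.prod_mul_distrib]

lemma chi_mul_arg (k : Fin n → ℤ) (z w : Fin n → Circle) :
    chi k (w * z) = chi k w * chi k z := by
  simp [chi_apply, mul_zpow, ← Finset.prod_mul_distrib]

lemma chi_pow (k : Fin n → ℤ) (m : ℕ) (z : Fin n → Circle) :
    chi k (fun j => z j ^ m) = chi ((m : ℤ) • k) z := by
  simp only [chi_apply, Pi.smul_apply, smul_eq_mul]
  refine Finset.prod_congr rfl fun j _ => ?_
  rw [← zpow_natCast (z j) m, ← zpow_mul]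

lemma star_chi (k : Fin n → ℤ) : star (chi k) = chi (-k) := by
  ext z
  simp only [ContinuousMap.star_apply, chi_apply, star_prod]
  refine Finset.prod_congr rfl fun j _ => ?_
  rw [Pi.neg_apply, zpow_neg, Circle.coe_inv_eq_conj]
  rfl

lemma chi_single (j : Fin n) (z : Fin n → Circle) :
    chi (Pi.single j 1) z = (z j : ℂ) := by
  rw [chi_apply, Finset.prod_eq_single j]
  · simp
  · intro b _ hb; simp [Pi.single_apply, hb]
  · simp


lemma exists_zpow_ne_one {d : ℤ} (hd : d ≠ 0) : ∃ c : Circle, c ^ d ≠ 1 := by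
  refine ⟨Circle.exp 1, fun h => ?_⟩
  have h1 : Circle.exp 1 ^ d = Circle.exp ((d : ℝ) * 1) := by
    exact (Circle.exp_intCast_mul 1 d).symm
  rw [h1, mul_one] at h
  obtain ⟨m, hm⟩ := Circle.exp_eq_one.mp h
  have hm0 : m ≠ 0 := by
    rintro rfl
    simp at hm
    exact hd (by exact_mod_cast hm)
  have h2m : ((2 : ℝ) * m) ≠ 0 := by
    simp [hm0]
  have hpi : Real.pi = (d : ℝ) / (2 * m) := by
    rw [eq_div_iff h2m]
    linarith [hm]
  have : Real.pi = ((d / (2 * m) : ℚ) : ℝ) := by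
    rw [hpi]; push_cast; ring
  exact (Rat.not_irrational _) (this ▸ irrational_pi)


lemma cont_integrable (σ : Measure (Fin n → Circle)) [IsFiniteMeasure σ]
    {E : Type*} [NormedAddCommGroup E] {f : (Fin n → Circle) → E}
    (hf : Continuous f) : Integrable f σ :=
  hf.integrable_of_hasCompactSupport (HasCompactSupport.of_compactSpace f)

variable {μ : Measure (Fin n → Circle)} [μ.IsHaarMeasure] [IsProbabilityMeasure μ]

lemma integral_chi {k : Fin n → ℤ} (hk : k ≠ 0) : ∫ z, chi k z ∂μ = 0 := by
  obtain ⟨j, hj⟩ : ∃ j, k j ≠ 0 := by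
    by_contra hc; push_neg at hc; exact hk (funext hc)
  obtain ⟨c, hc⟩ := exists_zpow_ne_one hj
  set w : Fin n → Circle := Function.update 1 j c with hw
  have hchiw : chi k w = ((c ^ k j : Circle) : ℂ) := by
    rw [chi_apply, Finset.prod_eq_single j]
    · simp [hw]
    · intro b _ hb; simp [hw, Function.update_apply, hb]
    · simp
  have key : ∫ z, chi k (w * z) ∂μ = ∫ z, chi k z ∂μ :=
    integral_mul_left_eq_self (fun z => chi k z) w
  have step : (chi k w) * ∫ z, chi k z ∂μ = ∫ z, chi k z ∂μ := by
    rw [← integral_const_mul, ← key]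
    exact integral_congr_ae (Filter.Eventually.of_forall fun z => (chi_mul_arg k z w).symm)
  have hne : chi k w ≠ 1 := by
    rw [hchiw]; exact fun h => hc (Circle.coe_eq_one.mp h)
  have hz : (chi k w - 1) * ∫ z, chi k z ∂μ = 0 := by
    rw [sub_mul, one_mul, step, sub_self]
  rcases mul_eq_zero.mp hz with h | h
  · exact absurd (sub_eq_zero.mp h) hne
  · exact h

lemma integral_chi_zero : ∫ z, chi (0 : Fin n → ℤ) z ∂μ = 1 := by
  simp [chi_zero]


/-- The span of characters. -/
noncomputable def V (n : ℕ) : Submodule ℂ C(Fin n → Circle, ℂ) :=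
  Submodule.span ℂ (Set.range (chi (n := n)))

lemma mul_mem_V {P Q : C(Fin n → Circle, ℂ)} (hP : P ∈ V n) (hQ : Q ∈ V n) :
    P * Q ∈ V n := by
  have h1 : P * Q ∈ V n * V n := Submodule.mul_mem_mul hP hQ
  have h2 : V n * V n = Submodule.span ℂ (Set.range (chi (n := n)) * Set.range (chi (n := n))) :=
    Submodule.span_mul_span ℂ _ _
  rw [h2] at h1
  refine Submodule.span_le.mpr ?_ h1
  rintro x ⟨a, ⟨k, rfl⟩, b, ⟨l, rfl⟩, rfl⟩
  refine Submodule.subset_span ⟨k + l, ?_⟩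
  ext z; rw [chi_add_apply]; rfl

lemma star_mem_V {P : C(Fin n → Circle, ℂ)} (hP : P ∈ V n) : star P ∈ V n := by
  induction hP using Submodule.span_induction with
  | mem x hx => obtain ⟨k, rfl⟩ := hx; rw [star_chi]; exact Submodule.subset_span ⟨-k, rfl⟩
  | zero => simpa using (V n).zero_mem
  | add x y _ _ hx hy => rw [star_add]; exact add_mem hx hy
  | smul c x _ hx => rw [star_smul]; exact Submodule.smul_mem _ _ hx

lemma chi_mem_V (k : Fin n → ℤ) : chi k ∈ V n := Submodule.subset_span ⟨k, rfl⟩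

/-- Stone–Weierstrass: density of the character span. -/
lemma exists_approx (F : C(Fin n → Circle, ℂ)) {ε : ℝ} (hε : 0 < ε) :
    ∃ P ∈ V n, ‖F - P‖ < ε := by
  set A : StarSubalgebra ℂ C(Fin n → Circle, ℂ) :=
    StarAlgebra.adjoin ℂ (Set.range (chi (n := n))) with hA
  have hsep : A.SeparatesPoints := by
    intro z w hzw
    obtain ⟨j, hj⟩ : ∃ j, z j ≠ w j := by
      by_contra hc; push_neg at hc; exact hzw (funext hc)
    refine ⟨_, ⟨chi (Pi.single j 1), StarAlgebra.subset_adjoin ℂ _ ⟨_, rfl⟩, rfl⟩, ?_⟩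
    show (chi (Pi.single j 1)) z ≠ (chi (Pi.single j 1)) w
    rw [chi_single, chi_single]
    exact fun h => hj (Circle.coe_injective h)
  have htop := ContinuousMap.starSubalgebra_topologicalClosure_eq_top_of_separatesPoints A hsep
  have hF : F ∈ closure (A : Set C(Fin n → Circle, ℂ)) := by
    have : F ∈ A.topologicalClosure := htop ▸ StarSubalgebra.mem_top
    exact this
  obtain ⟨P, hPA, hPd⟩ := Metric.mem_closure_iff.mp hF ε hε
  refine ⟨P, ?_, by rwa [← dist_eq_norm]⟩
  -- A ≤ V
  clear hPd
  induction hPA using StarAlgebra.adjoin_induction with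
  | mem x hx => obtain ⟨k, rfl⟩ := hx; exact chi_mem_V k
  | algebraMap c =>
      have : (algebraMap ℂ C(Fin n → Circle, ℂ)) c = c • chi 0 := by
        rw [chi_zero, Algebra.algebraMap_eq_smul_one]
      rw [this]; exact Submodule.smul_mem _ _ (chi_mem_V 0)
  | add x y _ _ hx hy => exact add_mem hx hy
  | mul x y _ _ hx hy => exact mul_mem_V hx hy
  | star x _ hx => exact star_mem_V hx


lemma eventually_integral_mul_zero {k : Fin n → ℤ} (hk : k ≠ 0)
    {P : C(Fin n → Circle, ℂ)} (hP : P ∈ V n) :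
    ∀ᶠ m : ℕ in atTop, ∫ z, chi ((m : ℤ) • k) z * P z ∂μ = 0 := by
  obtain ⟨j, hj⟩ : ∃ j, k j ≠ 0 := by
    by_contra hc; push_neg at hc; exact hk (funext hc)
  induction hP using Submodule.span_induction with
  | mem x hx =>
      obtain ⟨l, rfl⟩ := hx
      filter_upwards [Filter.eventually_ge_atTop ((l j).natAbs + 1)] with m hm
      have h1 : ∀ z, chi ((m : ℤ) • k) z * chi l z = chi ((m : ℤ) • k + l) z :=
        fun z => (chi_add_apply _ _ z).symm
      simp_rw [h1]
      apply integral_chi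
      intro h0
      have h2 : (m : ℤ) * k j + l j = 0 := by
        have := congrFun h0 j
        simpa using this
      have habs : ((l j).natAbs : ℤ) + 1 ≤ (m : ℤ) := by exact_mod_cast hm
      have h3 : |(m : ℤ) * k j| = |l j| := by
        have : (m : ℤ) * k j = -l j := by linarith
        rw [this, abs_neg]
      have h4 : (m : ℤ) ≤ |(m : ℤ) * k j| := by
        rw [abs_mul]
        have h5 : 1 ≤ |k j| := Int.one_le_abs hj
        have h6 : (0 : ℤ) ≤ (m : ℤ) := Int.natCast_nonneg m
        have := abs_of_nonneg h6
        nlinarith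
      have h5 : |l j| = ((l j).natAbs : ℤ) := Int.abs_eq_natAbs _
      omega
  | zero => exact Filter.Eventually.of_forall fun m => by simp
  | add x y hx' hy' hx hy =>
      filter_upwards [hx, hy] with m h1 h2
      have hix : Integrable (fun z => chi ((m : ℤ) • k) z * x z) μ :=
        cont_integrable μ ((chi _).continuous.mul x.continuous)
      have hiy : Integrable (fun z => chi ((m : ℤ) • k) z * y z) μ :=
        cont_integrable μ ((chi _).continuous.mul y.continuous)
      simp_rw [ContinuousMap.add_apply, mul_add]
      rw [integral_add hix hiy, h1, h2, add_zero]
  | smul c x hx' hx =>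
      filter_upwards [hx] with m h1
      simp_rw [ContinuousMap.smul_apply, mul_smul_comm]
      rw [integral_smul, h1, smul_zero]


lemma tendsto_integral_smul_chi {k : Fin n → ℤ} (hk : k ≠ 0)
    {g : (Fin n → Circle) → ℝ} (hg : Integrable g μ) :
    Tendsto (fun m : ℕ => ∫ z, g z • chi ((m : ℤ) • k) z ∂μ) atTop (𝓝 0) := by
  rw [NormedAddCommGroup.tendsto_nhds_zero]
  intro ε hε
  obtain ⟨h, hh1, hh2⟩ := hg.exists_boundedContinuous_integral_sub_le
    (show (0 : ℝ) < ε / 4 by linarith)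
  set hC : C(Fin n → Circle, ℂ) :=
    ⟨fun z => ((h z : ℝ) : ℂ), Complex.continuous_ofReal.comp h.continuous⟩ with hhC
  obtain ⟨P, hPV, hPd⟩ := exists_approx hC (show (0 : ℝ) < ε / 4 by linarith)
  filter_upwards [eventually_integral_mul_zero (μ := μ) hk hPV] with m hm0
  set ch : C(Fin n → Circle, ℂ) := chi ((m : ℤ) • k) with hch
  have hch_mem : MemLp (fun z => ch z) ⊤ μ :=
    memLp_top_of_bound ch.continuous.aestronglyMeasurable 1
      (Filter.Eventually.of_forall fun z => le_of_eq (norm_chi _ z))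
  have hI1 : Integrable (fun z => (g z - h z) • ch z) μ :=
    (hg.sub hh2).smul_of_top_left hch_mem
  have hI2 : Integrable (fun z => ch z * (hC z - P z)) μ :=
    cont_integrable μ (ch.continuous.mul (hC.continuous.sub P.continuous))
  have hI3 : Integrable (fun z => ch z * P z) μ :=
    cont_integrable μ (ch.continuous.mul P.continuous)
  have hdecomp : ∀ z : Fin n → Circle,
      g z • ch z = (g z - h z) • ch z + (ch z * (hC z - P z) + ch z * P z) := by
    intro z
    have : (ch z * (hC z - P z) + ch z * P z) = (h z) • ch z := by
      simp [hhC, Complex.real_smul]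
      ring
    rw [this, ← add_smul]
    ring_nf
  rw [integral_congr_ae (Filter.Eventually.of_forall hdecomp),
    integral_add hI1 (cont_integrable μ (f := fun z => ch z * (hC z - P z) + ch z * P z)
      (((ch.continuous.mul (hC.continuous.sub P.continuous)).add
        (ch.continuous.mul P.continuous)) :
        Continuous fun z => ch z * (hC z - P z) + ch z * P z)),
    integral_add hI2 hI3, hm0, add_zero]
  have hb1 : ‖∫ z, (g z - h z) • ch z ∂μ‖ ≤ ε / 4 := by
    refine le_trans (norm_integral_le_integral_norm _) ?_
    refine le_trans (le_of_eq (integral_congr_ae (Filter.Eventually.of_forall fun z => ?_))) hh1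
    simp [hch, norm_smul, norm_chi, ← Complex.ofReal_sub, Complex.norm_real]
  have hb2 : ‖∫ z, ch z * (hC z - P z) ∂μ‖ ≤ ε / 4 := by
    have : ∀ z : Fin n → Circle, ‖ch z * (hC z - P z)‖ ≤ ε / 4 := by
      intro z
      rw [norm_mul, norm_chi, one_mul]
      exact le_trans (le_trans (le_of_eq rfl) ((hC - P).norm_coe_le_norm z)) (le_of_lt hPd)
    refine le_trans (norm_integral_le_of_norm_le_const
      (Filter.Eventually.of_forall this)) ?_
    simp
  refine lt_of_le_of_lt (norm_add_le _ _) ?_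
  linarith


lemma continuous_powmap (m : ℕ) :
    Continuous fun z : Fin n → Circle => (fun j => z j ^ m : Fin n → Circle) :=
  continuous_pi fun j => ((continuous_pow m : Continuous fun a : Circle => a ^ m).comp (continuous_apply j))

variable {ν : Measure (Fin n → Circle)} [IsProbabilityMeasure ν]

lemma tendsto_integral_chi_nu (hν : ν ≪ μ) {k : Fin n → ℤ} (hk : k ≠ 0) :
    Tendsto (fun m : ℕ => ∫ z, chi ((m : ℤ) • k) z ∂ν) atTop (𝓝 0) := by
  have hrw : ∀ m : ℕ, ∫ z, chi ((m : ℤ) • k) z ∂ν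
      = ∫ z, (ν.rnDeriv μ z).toReal • chi ((m : ℤ) • k) z ∂μ :=
    fun m => (integral_rnDeriv_smul hν).symm
  simp_rw [hrw]
  exact tendsto_integral_smul_chi hk (Measure.integrable_toReal_rnDeriv)

lemma tendsto_V (hν : ν ≪ μ) {P : C(Fin n → Circle, ℂ)} (hP : P ∈ V n) :
    Tendsto (fun m : ℕ => ∫ z, P (fun j => z j ^ m) ∂ν) atTop (𝓝 (∫ z, P z ∂μ)) := by
  induction hP using Submodule.span_induction with
  | mem x hx =>
      obtain ⟨k, rfl⟩ := hx
      by_cases hk : k = 0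
      · subst hk
        have h1 : ∀ m : ℕ, ∫ z, chi (0 : Fin n → ℤ) (fun j => z j ^ m) ∂ν = 1 := by
          intro m
          simp [chi_zero]
        simp_rw [h1, integral_chi_zero]
        exact tendsto_const_nhds
      · have h1 : ∀ m : ℕ, ∫ z, chi k (fun j => z j ^ m) ∂ν
            = ∫ z, chi ((m : ℤ) • k) z ∂ν := by
          intro m
          exact integral_congr_ae (Filter.Eventually.of_forall fun z => chi_pow k m z)
        simp_rw [h1, integral_chi hk]
        exact tendsto_integral_chi_nu hν hk
  | zero => simp
  | add x y hx' hy' hx hy =>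
      have h1 : ∀ m : ℕ, ∫ z, (x + y) (fun j => z j ^ m) ∂ν
          = (∫ z, x (fun j => z j ^ m) ∂ν) + ∫ z, y (fun j => z j ^ m) ∂ν := by
        intro m
        simp_rw [ContinuousMap.add_apply]
        exact integral_add (cont_integrable ν (x.continuous.comp (continuous_powmap m)))
          (cont_integrable ν (y.continuous.comp (continuous_powmap m)))
      have h2 : ∫ z, (x + y) z ∂μ = (∫ z, x z ∂μ) + ∫ z, y z ∂μ := by
        simp_rw [ContinuousMap.add_apply]
        exact integral_add (cont_integrable μ x.continuous) (cont_integrable μ y.continuous)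
      simp_rw [h1, h2]
      exact hx.add hy
  | smul c x hx' hx =>
      have h1 : ∀ m : ℕ, ∫ z, (c • x) (fun j => z j ^ m) ∂ν
          = c • ∫ z, x (fun j => z j ^ m) ∂ν := by
        intro m
        simp_rw [ContinuousMap.smul_apply]
        exact integral_smul c _
      have h2 : ∫ z, (c • x) z ∂μ = c • ∫ z, x z ∂μ := by
        simp_rw [ContinuousMap.smul_apply]
        exact integral_smul c _
      simp_rw [h1, h2]
      exact hx.const_smul c

lemma tendsto_main_complex (hν : ν ≪ μ) (F : C(Fin n → Circle, ℂ)) :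
    Tendsto (fun m : ℕ => ∫ z, F (fun j => z j ^ m) ∂ν) atTop (𝓝 (∫ z, F z ∂μ)) := by
  rw [Metric.tendsto_atTop]
  intro ε hε
  obtain ⟨P, hPV, hPd⟩ := exists_approx F (show (0 : ℝ) < ε / 3 by linarith)
  have hT := tendsto_V hν hPV
  rw [Metric.tendsto_atTop] at hT
  obtain ⟨N, hN⟩ := hT (ε / 3) (by linarith)
  refine ⟨N, fun m hm => ?_⟩
  have key : ∀ (σ : Measure (Fin n → Circle)) [IsProbabilityMeasure σ]
      (φ : (Fin n → Circle) → (Fin n → Circle)) (hφ : Continuous φ),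
      dist (∫ z, F (φ z) ∂σ) (∫ z, P (φ z) ∂σ) ≤ ε / 3 := by
    intro σ _ φ hφ
    have hFi : Integrable (fun z => F (φ z)) σ := cont_integrable σ (F.continuous.comp hφ)
    have hPi : Integrable (fun z => P (φ z)) σ := cont_integrable σ (P.continuous.comp hφ)
    rw [dist_eq_norm, ← integral_sub hFi hPi]
    refine le_trans (norm_integral_le_of_norm_le_const (C := ε / 3)
      (Filter.Eventually.of_forall fun z => ?_)) (by simp)
    calc ‖F (φ z) - P (φ z)‖ = ‖(F - P) (φ z)‖ := by rw [ContinuousMap.sub_apply]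
    _ ≤ ‖F - P‖ := (F - P).norm_coe_le_norm _
    _ ≤ ε / 3 := le_of_lt hPd
  have d1 := key ν (fun z => (fun j => z j ^ m)) (continuous_powmap m)
  have d3 := key μ id continuous_id
  calc dist (∫ z, F (fun j => z j ^ m) ∂ν) (∫ z, F z ∂μ)
      ≤ dist (∫ z, F (fun j => z j ^ m) ∂ν) (∫ z, P (fun j => z j ^ m) ∂ν)
        + dist (∫ z, P (fun j => z j ^ m) ∂ν) (∫ z, P z ∂μ)
        + dist (∫ z, P z ∂μ) (∫ z, F z ∂μ) := dist_triangle4 _ _ _ _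
  _ < ε / 3 + ε / 3 + ε / 3 := by
      have := hN m hm
      have := dist_comm (∫ z, P z ∂μ) (∫ z, F z ∂μ)
      refine add_lt_add_of_lt_of_le (add_lt_add_of_le_of_lt d1 (hN m hm)) ?_
      rw [dist_comm]
      exact d3
  _ = ε := by ring

end TorusPowerAux


/-- If `Z` is a random element of the `n`-torus `(𝕊¹)ⁿ` whose law `ν` is
absolutely continuous with respect to Haar measure `μ`, then `Zᵐ` (coordinatewise `m`-th
power) converges in distribution, as `m → ∞`, to a Haar-distributed element of `(𝕊¹)ⁿ`. -/
theorem power_tendsto_haar_on_torus {n : ℕ}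
    (μ : Measure (Fin n → Circle)) [μ.IsHaarMeasure] [IsProbabilityMeasure μ]
    (ν : Measure (Fin n → Circle)) [IsProbabilityMeasure ν] (hν : ν ≪ μ) :
    ∀ f : BoundedContinuousFunction (Fin n → Circle) ℝ,
      Tendsto (fun m : ℕ => ∫ z, f z ∂(ν.map (fun z j => z j ^ m))) atTop
        (𝓝 (∫ z, f z ∂μ)) := by
  intro f
  have hmap : ∀ m : ℕ, ∫ z, f z ∂(ν.map (fun z j => z j ^ m))
      = ∫ z, f (fun j => z j ^ m) ∂ν := fun m =>
    integral_map (TorusPowerAux.continuous_powmap m).measurable.aemeasurable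
      f.continuous.aestronglyMeasurable
  simp_rw [hmap]
  have hC := TorusPowerAux.tendsto_main_complex (μ := μ) hν
    ⟨fun z => ((f z : ℝ) : ℂ), Complex.continuous_ofReal.comp f.continuous⟩
  simp only [ContinuousMap.coe_mk] at hC
  have h1 : ∀ m : ℕ, ∫ z, ((f (fun j => z j ^ m) : ℝ) : ℂ) ∂ν
      = ((∫ z, f (fun j => z j ^ m) ∂ν : ℝ) : ℂ) := fun m => integral_ofReal
  have h2 : ∫ z, ((f z : ℝ) : ℂ) ∂μ = ((∫ z, f z ∂μ : ℝ) : ℂ) := integral_ofReal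
  rw [h2] at hC
  simp_rw [h1] at hC
  have hre := (Complex.continuous_re.tendsto _).comp hC
  simpa [Function.comp_def] using hre
end

section
/- Let T ≅ (𝕊¹)ⁿ be a torus and let ρ : T → ℝ be a probability density with respect to Haar measure which is a finite Laurent polynomial in the coordinates z₁,...,zₙ, with degree at most M in each variable zⱼ. If Z is a random element of T with density ρ, then for every m > M, Zᵐ is exactly Haar-distributed on T. -/
open MeasureTheory Filter Topology

lemma circle_coe_zpow (z : Circle) (k : ℤ) : ((z ^ k : Circle) : ℂ) = (z : ℂ) ^ k := by
  cases k with
  | ofNat n => rw [Int.ofNat_eq_coe, zpow_natCast, zpow_natCast]; exact map_pow Circle.coeHom z n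
  | negSucc n => rw [zpow_negSucc, zpow_negSucc, Circle.coe_inv]; norm_cast

lemma circle_exp_zpow (t : ℝ) (k : ℤ) : (Circle.exp t) ^ k = Circle.exp (k * t) := by
  ext
  rw [circle_coe_zpow, Circle.coe_exp, Circle.coe_exp, ← Complex.exp_int_mul]
  push_cast
  ring_nf

lemma circle_exp_pow (t : ℝ) (k : ℕ) : (Circle.exp t) ^ k = Circle.exp (k * t) := by
  have := circle_exp_zpow t k
  simpa using this

/-- Let `ρ` be a probability density on the torus `T = (𝕊¹)ⁿ` with respect
to (probability) Haar measure `μ`, which is a finite Laurent polynomial in the coordinates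
`z₁,…,zₙ` of degree at most `M` in each variable.  If `Z` has density `ρ`, then for every
`m > M` the law of `Zᵐ` is exactly Haar measure. -/
theorem power_exactly_haar_of_laurent_density {n : ℕ}
    (μ : Measure (Fin n → Circle)) [μ.IsHaarMeasure] [IsProbabilityMeasure μ]
    (ρ : (Fin n → Circle) → ℝ) (hρ_nonneg : 0 ≤ ρ)
    (hρ_prob : ∫ z, ρ z ∂μ = 1)
    (F : Finset (Fin n → ℤ)) (a : (Fin n → ℤ) → ℂ) (M : ℕ)
    (hdeg : ∀ p ∈ F, ∀ j, (p j).natAbs ≤ M)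
    (hρ_poly : ∀ z : Fin n → Circle,
      (ρ z : ℂ) = ∑ p ∈ F, a p * ∏ j, ((z j : ℂ) ^ (p j))) :
    ∀ m : ℕ, M < m →
      (μ.withDensity (fun z => ENNReal.ofReal (ρ z))).map (fun z j => z j ^ m) = μ := by
  intro m hm
  have hm0 : (m : ℝ) ≠ 0 := Nat.cast_ne_zero.mpr (by omega)
  -- the power map as a monoid hom
  set φ : (Fin n → Circle) → (Fin n → Circle) := fun z j => z j ^ m with hφ
  have hφcont : Continuous φ := continuous_pi fun j => (continuous_apply j).pow m
  have hφmeas : Measurable φ := hφcont.measurable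
  have hφsurj : Function.Surjective φ := by
    intro c
    refine ⟨fun j => Circle.exp (Complex.arg (c j) / m), funext fun j => ?_⟩
    simp only [hφ]
    rw [circle_exp_pow, mul_div_cancel₀ _ hm0, Circle.exp_arg]
  have hφmul : ∀ w z : Fin n → Circle, φ (w * z) = φ w * φ z := by
    intro w z; funext j; simp [hφ, mul_pow]
  let ψ : (Fin n → Circle) →* (Fin n → Circle) :=
    { toFun := φ, map_one' := by funext j; simp [hφ], map_mul' := hφmul }
  -- Haar pushes forward to Haar
  haveI : Measure.IsHaarMeasure (μ.map ψ) :=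
    Measure.isHaarMeasure_map_of_isFiniteMeasure μ ψ hφcont hφsurj
  haveI : IsProbabilityMeasure (μ.map ψ) :=
    Measure.isProbabilityMeasure_map hφmeas.aemeasurable
  have hmap : μ.map ψ = μ := Measure.isHaarMeasure_eq_of_isProbabilityMeasure _ _
  have hmapA : ∀ A : Set (Fin n → Circle), MeasurableSet A → μ (φ ⁻¹' A) = μ A := by
    intro A hA
    have h := Measure.map_apply (μ := μ) (f := (ψ : (Fin n → Circle) → (Fin n → Circle)))
      hφmeas hA
    rw [hmap] at h
    exact h.symm
  -- continuity of the monomials and of ρ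
  have hχcont : ∀ p : Fin n → ℤ,
      Continuous (fun z : Fin n → Circle => ∏ j, ((z j : ℂ) ^ (p j))) := by
    intro p
    refine continuous_finset_prod _ fun j _ => ?_
    exact ((continuous_apply j).subtype_val).zpow₀ _ (fun z => Or.inl (Circle.coe_ne_zero _))
  have hρ_cont : Continuous ρ := by
    have : ρ = fun z => (∑ p ∈ F, a p * ∏ j, ((z j : ℂ) ^ (p j))).re := by
      funext z; rw [← hρ_poly z, Complex.ofReal_re]
    rw [this]
    exact Complex.continuous_re.comp
      (continuous_finset_sum _ fun p _ => continuous_const.mul (hχcont p))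
  have hIntχ : ∀ p : Fin n → ℤ,
      Integrable (fun z : Fin n → Circle => ∏ j, ((z j : ℂ) ^ (p j))) μ := fun p =>
    integrableOn_univ.mp ((hχcont p).continuousOn.integrableOn_compact isCompact_univ)
  have hρInt : Integrable ρ μ :=
    integrableOn_univ.mp (hρ_cont.continuousOn.integrableOn_compact isCompact_univ)
  -- key vanishing of nonconstant monomial integrals over φ-invariant sets
  have key : ∀ A : Set (Fin n → Circle), MeasurableSet A → ∀ p ∈ F, p ≠ 0 →
      ∫ z in φ ⁻¹' A, (∏ j, ((z j : ℂ) ^ (p j))) ∂μ = 0 := by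
    intro A hA p hpF hp0
    obtain ⟨j₀, hj₀⟩ : ∃ j, p j ≠ 0 := by
      by_contra h; push_neg at h; exact hp0 (funext fun j => h j)
    set B : Set (Fin n → Circle) := φ ⁻¹' A with hB
    have hBmeas : MeasurableSet B := hφmeas hA
    set χ : (Fin n → Circle) → ℂ := fun z => ∏ j, ((z j : ℂ) ^ (p j)) with hχ
    set ζ : Circle := Circle.exp (2 * Real.pi / m) with hζ
    set w : Fin n → Circle := Function.update (1 : Fin n → Circle) j₀ ζ with hw
    have hwφ : ∀ z, φ (w * z) = φ z := by
      intro z; funext j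
      simp only [hφ, Pi.mul_apply, mul_pow]
      rcases eq_or_ne j j₀ with rfl | hj
      · have : ζ ^ m = 1 := by
          rw [hζ, circle_exp_pow, mul_div_cancel₀ _ hm0, Circle.exp_two_pi]
        simp [hw, this]
      · simp [hw, Function.update_of_ne hj]
    set c : ℂ := (ζ : ℂ) ^ (p j₀) with hc
    have hχw : ∀ z, χ (w * z) = c * χ z := by
      intro z
      show (∏ j, (((w * z) j : ℂ) ^ (p j))) = c * ∏ j, ((z j : ℂ) ^ (p j))
      calc (∏ j, (((w * z) j : ℂ) ^ (p j)))
          = ∏ j, ((w j : ℂ) ^ (p j) * (z j : ℂ) ^ (p j)) := by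
            refine Finset.prod_congr rfl fun j _ => ?_
            rw [Pi.mul_apply, Circle.coe_mul, mul_zpow]
        _ = (∏ j, (w j : ℂ) ^ (p j)) * ∏ j, (z j : ℂ) ^ (p j) := Finset.prod_mul_distrib
        _ = c * ∏ j, ((z j : ℂ) ^ (p j)) := by
            congr 1
            rw [Fintype.prod_eq_single j₀
              (fun j hj => by simp [hw, Function.update_of_ne hj])]
            simp [hw, hc]
    have hcne : c ≠ 1 := by
      intro hc1
      have hζp : (ζ ^ (p j₀) : Circle) = 1 := by
        apply Circle.coe_injective
        rw [circle_coe_zpow, Circle.coe_one]; exact hc1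
      rw [hζ, circle_exp_zpow, Circle.exp_eq_one] at hζp
      obtain ⟨k, hk⟩ := hζp
      have hpi : (0:ℝ) < 2 * Real.pi := by positivity
      have hpk : (p j₀ : ℝ) = (k : ℝ) * m := by
        have h1 : (p j₀ : ℝ) * (2 * Real.pi) = ((k : ℝ) * m) * (2 * Real.pi) := by
          have h2 := congrArg (fun x : ℝ => x * m) hk
          field_simp at h2
          nlinarith [h2]
        exact mul_right_cancel₀ (ne_of_gt hpi) h1
      have hpk' : p j₀ = k * m := by exact_mod_cast hpk
      have hk0 : k ≠ 0 := by
        intro h; rw [h, zero_mul] at hpk'; exact hj₀ hpk'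
      have h1k : 1 ≤ |k| := Int.one_le_abs hk0
      have hgem : (m : ℤ) ≤ |p j₀| := by
        rw [hpk', abs_mul]
        calc (m : ℤ) = 1 * |(m : ℤ)| := by simp
        _ ≤ |k| * |(m : ℤ)| := mul_le_mul_of_nonneg_right h1k (abs_nonneg _)
      have hdj := hdeg p hpF j₀
      rw [Int.abs_eq_natAbs] at hgem
      omega
    have hχint : Integrable (B.indicator χ) μ := (hIntχ p).indicator hBmeas
    have hinv := integral_mul_left_eq_self (μ := μ) (B.indicator χ) w
    have hindw : ∀ z, (B.indicator χ) (w * z) = c * (B.indicator χ) z := by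
      intro z
      rcases Classical.em (z ∈ B) with hz | hz
      · have hwz : w * z ∈ B := by
          simp only [hB, Set.mem_preimage]; rw [hwφ]; exact hz
        rw [Set.indicator_of_mem hz, Set.indicator_of_mem hwz, hχw]
      · have hwz : w * z ∉ B := by
          simp only [hB, Set.mem_preimage] at hz ⊢; rw [hwφ]; exact hz
        rw [Set.indicator_of_notMem hz, Set.indicator_of_notMem hwz, mul_zero]
    rw [show (fun z => (B.indicator χ) (w * z)) = fun z => c * (B.indicator χ) z from
      funext hindw, integral_const_mul] at hinv
    have hzero : ∫ z, B.indicator χ z ∂μ = 0 := by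
      by_contra h
      exact hcne (mul_right_cancel₀ h (by rw [hinv, one_mul]))
    rw [← integral_indicator hBmeas]
    exact hzero
  -- the constant coefficient
  set a₀ : ℂ := if (0 : Fin n → ℤ) ∈ F then a 0 else 0 with ha₀
  have hInt : ∀ A : Set (Fin n → Circle), MeasurableSet A →
      ∫ z in φ ⁻¹' A, (ρ z : ℂ) ∂μ = a₀ * ((μ (φ ⁻¹' A)).toReal : ℂ) := by
    intro A hA
    have hsum : ∫ z in φ ⁻¹' A, (ρ z : ℂ) ∂μ
        = ∑ p ∈ F, a p * ∫ z in φ ⁻¹' A, (∏ j, ((z j : ℂ) ^ (p j))) ∂μ := by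
      simp_rw [hρ_poly]
      rw [integral_finset_sum _ fun p _ => ((hIntχ p).const_mul (a p)).integrableOn]
      exact Finset.sum_congr rfl fun p _ => integral_const_mul _ _
    rw [hsum]
    have hterm : ∀ p ∈ F, a p * ∫ z in φ ⁻¹' A, (∏ j, ((z j : ℂ) ^ (p j))) ∂μ
        = if p = 0 then a 0 * ((μ (φ ⁻¹' A)).toReal : ℂ) else 0 := by
      intro p hpF
      rcases eq_or_ne p 0 with rfl | hp
      · simp only [if_pos rfl]
        congr 1
        have h1 : (fun z : Fin n → Circle => ∏ j, ((z j : ℂ) ^ ((0 : Fin n → ℤ) j)))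
            = fun _ => (1 : ℂ) := by funext z; simp
        rw [h1, integral_const]
        simp; rfl
      · rw [key A hA p hpF hp, mul_zero, if_neg hp]
    rw [Finset.sum_congr rfl hterm, Finset.sum_ite_eq' F 0
      (fun _ => a 0 * ((μ (φ ⁻¹' A)).toReal : ℂ))]
    rw [ha₀]
    split <;> simp
  have ha1 : a₀ = 1 := by
    have h := hInt Set.univ MeasurableSet.univ
    simp only [Set.preimage_univ, Measure.restrict_univ, measure_univ] at h
    have hcast : ∫ z, ((ρ z : ℝ) : ℂ) ∂μ = ((∫ z, ρ z ∂μ : ℝ) : ℂ) := integral_ofReal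
    rw [hcast, hρ_prob] at h
    simpa using h.symm
  -- conclusion
  ext A hA
  rw [Measure.map_apply hφmeas hA, withDensity_apply _ (hφmeas hA)]
  have h1 : ∫⁻ z in φ ⁻¹' A, ENNReal.ofReal (ρ z) ∂μ
      = ENNReal.ofReal (∫ z in φ ⁻¹' A, ρ z ∂μ) :=
    (ofReal_integral_eq_lintegral_ofReal hρInt.integrableOn
      (Eventually.of_forall fun z => hρ_nonneg z)).symm
  rw [h1]
  have h2 : ∫ z in φ ⁻¹' A, ρ z ∂μ = (μ (φ ⁻¹' A)).toReal := by
    have h := hInt A hA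
    have hcast : ∫ z in φ ⁻¹' A, ((ρ z : ℝ) : ℂ) ∂μ
        = ((∫ z in φ ⁻¹' A, ρ z ∂μ : ℝ) : ℂ) := integral_ofReal
    rw [hcast, ha1, one_mul] at h
    exact_mod_cast h
  rw [h2, ENNReal.ofReal_toReal (measure_ne_top μ _), hmapA A hA]
end

section
/- Let (X, Z) be a random pair with values in S × T, where T is an n-torus, and suppose the law of Z is absolutely continuous with respect to Haar measure on T. Then (X, Zᵐ) converges in distribution as m → ∞ to (X, Y), where Y is Haar-distributed on T and independent of X. -/
open MeasureTheory Filter Topology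

namespace PairPower

variable {n : ℕ}

lemma circle_coe_pow (c : Circle) (m : ℕ) : ((c ^ m : Circle) : ℂ) = (c : ℂ) ^ m :=
  map_pow Circle.coeHom c m

/-- The character on the torus attached to `l : ℤⁿ`. -/
noncomputable def chi (l : Fin n → ℤ) : C((Fin n → Circle), ℂ) :=
  ⟨fun z => ((∏ i, (z i) ^ (l i) : Circle) : ℂ),
    continuous_subtype_val.comp (show Continuous (fun z : Fin n → Circle => ∏ i, (z i) ^ (l i)) from
      (continuous_finset_prod _ fun i _ => (continuous_apply i).zpow (l i)))⟩

lemma chi_apply (l : Fin n → ℤ) (z : Fin n → Circle) :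
    chi l z = ((∏ i, (z i) ^ (l i) : Circle) : ℂ) := rfl

@[simp] lemma norm_chi (l : Fin n → ℤ) (z : Fin n → Circle) : ‖chi l z‖ = 1 := by
  simp [chi_apply, Circle.norm_coe]

lemma chi_zero : (chi (0 : Fin n → ℤ)) = 1 := by
  ext z; simp [chi_apply]

lemma chi_mul_apply (l j : Fin n → ℤ) (z : Fin n → Circle) :
    chi l z * chi j z = chi (l + j) z := by
  have h : (∏ i, (z i) ^ (l i)) * (∏ i, (z i) ^ (j i)) = ∏ i, (z i) ^ ((l + j) i) := by
    rw [← Finset.prod_mul_distrib]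
    exact Finset.prod_congr rfl fun i _ => by rw [Pi.add_apply, zpow_add]
  rw [chi_apply, chi_apply, chi_apply, ← Circle.coe_mul, h]

lemma chi_pow (l : Fin n → ℤ) (z : Fin n → Circle) (m : ℕ) :
    chi l z ^ m = chi (m • l) z := by
  have h : ((∏ i, (z i) ^ (l i) : Circle))^m = ∏ i, (z i) ^ ((m • l) i) := by
    rw [← Finset.prod_pow]
    refine Finset.prod_congr rfl fun i _ => ?_
    rw [← zpow_natCast ((z i) ^ (l i)) m, ← zpow_mul]
    simp [mul_comm]
  rw [chi_apply, chi_apply, ← circle_coe_pow, h]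

lemma chi_translate (l : Fin n → ℤ) (g z : Fin n → Circle) :
    chi l (g * z) = chi l g * chi l z := by
  have h : (∏ i, ((g * z) i) ^ (l i)) = (∏ i, (g i) ^ (l i)) * ∏ i, (z i) ^ (l i) := by
    rw [← Finset.prod_mul_distrib]
    exact Finset.prod_congr rfl fun i _ => by rw [Pi.mul_apply, mul_zpow]
  rw [chi_apply, chi_apply, chi_apply, h, Circle.coe_mul]

lemma chi_powmap (l : Fin n → ℤ) (z : Fin n → Circle) (m : ℕ) :
    chi l (fun i => z i ^ m) = chi l z ^ m := by
  rw [chi_pow]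
  have h : (∏ i, ((z i ^ m)) ^ (l i)) = ∏ i, (z i) ^ ((m • l) i) := by
    refine Finset.prod_congr rfl fun i _ => ?_
    rw [← zpow_natCast (z i) m, ← zpow_mul, Pi.smul_apply, nsmul_eq_mul, mul_comm]
  rw [chi_apply, chi_apply, h]

lemma chi_single (i : Fin n) (z : Fin n → Circle) :
    chi (Pi.single i 1) z = (z i : ℂ) := by
  rw [chi_apply]
  rw [Finset.prod_eq_single i (fun j _ hj => by simp [Pi.single_eq_of_ne hj]) (by simp)]
  simp

lemma circle_coe_zpow (c : Circle) (k : ℤ) : ((c ^ k : Circle) : ℂ) = (c : ℂ) ^ k := by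
  have h := map_zpow Circle.toUnits c k
  have := congrArg (fun u : ℂˣ => (u : ℂ)) h
  simpa [Units.val_zpow_eq_zpow_val] using this

lemma exists_ne_one {l : Fin n → ℤ} (hl : l ≠ 0) :
    ∃ g : Fin n → Circle, (((∏ i, (g i) ^ (l i) : Circle) : ℂ)) ≠ 1 := by
  obtain ⟨i, hi⟩ : ∃ i, l i ≠ 0 := by
    by_contra h
    push_neg at h
    exact hl (funext fun i => h i)
  refine ⟨Function.update (1 : Fin n → Circle) i (Circle.exp (Real.pi / (l i))), ?_⟩
  have hprod : (∏ j, ((Function.update (1 : Fin n → Circle) i (Circle.exp (Real.pi / (l i)))) j) ^ (l j))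
      = (Circle.exp (Real.pi / (l i))) ^ (l i) := by
    rw [Finset.prod_eq_single i (fun j _ hj => by simp [Function.update_of_ne hj]) (by simp)]
    simp
  rw [hprod, circle_coe_zpow]
  have : ((Circle.exp (Real.pi / (l i)) : ℂ)) ^ (l i)
      = Complex.exp ((l i) * ((Real.pi / (l i) : ℝ) * Complex.I)) := by
    rw [Circle.coe_exp, ← Complex.exp_int_mul]
  rw [this]
  have hli : ((l i : ℝ)) ≠ 0 := Int.cast_ne_zero.mpr hi
  have harg : ((l i : ℂ)) * ((Real.pi / (l i) : ℝ) * Complex.I) = Real.pi * Complex.I := by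
    have hlic : ((l i : ℂ)) ≠ 0 := by exact_mod_cast hli
    push_cast
    field_simp
  rw [harg, Complex.exp_pi_mul_I]
  norm_num


end PairPower
namespace PairPower
variable {n : ℕ}

lemma chi_mul (l j : Fin n → ℤ) : chi l * chi j = chi (l + j) := by
  ext z; exact chi_mul_apply l j z

lemma chi_star (l : Fin n → ℤ) : star (chi l) = chi (-l) := by
  ext z
  rw [ContinuousMap.star_apply, chi_apply, chi_apply, RCLike.star_def, ← Circle.coe_inv_eq_conj]
  congr 1
  rw [← Finset.prod_inv_distrib]
  exact Finset.prod_congr rfl fun i _ => by rw [Pi.neg_apply, zpow_neg]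

lemma integral_chi {μT : Measure (Fin n → Circle)} [μT.IsHaarMeasure]
    {l : Fin n → ℤ} (hl : l ≠ 0) : ∫ z, chi l z ∂μT = 0 := by
  obtain ⟨g, hg⟩ := exists_ne_one hl
  have hg' : chi l g ≠ 1 := hg
  have h1 : ∫ z, chi l (g * z) ∂μT = ∫ z, chi l z ∂μT :=
    integral_mul_left_eq_self (fun z => chi l z) g
  have h2 : ∫ z, chi l (g * z) ∂μT = chi l g * ∫ z, chi l z ∂μT := by
    simp_rw [chi_translate]
    exact integral_const_mul _ _
  have key : chi l g * ∫ z, chi l z ∂μT = ∫ z, chi l z ∂μT := h2.symm.trans h1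
  have : (chi l g - 1) * ∫ z, chi l z ∂μT = 0 := by
    rw [sub_mul, one_mul, key, sub_self]
  rcases mul_eq_zero.mp this with h | h
  · exact absurd (sub_eq_zero.mp h) hg'
  · exact h

/-- The linear span of the characters. -/
noncomputable def charSpan (n : ℕ) : Submodule ℂ C((Fin n → Circle), ℂ) :=
  Submodule.span ℂ (Set.range (chi (n := n)))

/-- The star subalgebra of trigonometric polynomials. -/
noncomputable def charAlg (n : ℕ) : StarSubalgebra ℂ C((Fin n → Circle), ℂ) where
  carrier := charSpan n
  mul_mem' := by
    open Pointwise in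
    intro a b ha hb
    have hsub : Set.range (chi (n := n)) * Set.range (chi (n := n)) ⊆ Set.range (chi (n := n)) := by
      rintro x ⟨-, ⟨l, rfl⟩, -, ⟨j, rfl⟩, rfl⟩
      exact ⟨l + j, (chi_mul l j).symm⟩
    have h := Submodule.mul_mem_mul (show a ∈ charSpan n from ha) (show b ∈ charSpan n from hb)
    rw [charSpan, Submodule.span_mul_span] at h
    exact Submodule.span_le.mpr (hsub.trans Submodule.subset_span) h
  one_mem' := Submodule.subset_span ⟨0, chi_zero⟩
  add_mem' := fun ha hb => Submodule.add_mem _ ha hb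
  zero_mem' := Submodule.zero_mem _
  algebraMap_mem' := fun c => by
    have h1 : (1 : C((Fin n → Circle), ℂ)) ∈ charSpan n := Submodule.subset_span ⟨0, chi_zero⟩
    simpa [Algebra.algebraMap_eq_smul_one] using Submodule.smul_mem _ c h1
  star_mem' := by
    intro a ha
    refine Submodule.span_induction ?_ ?_ ?_ ?_ ha
    · rintro x ⟨l, rfl⟩
      exact Submodule.subset_span ⟨-l, (chi_star l).symm⟩
    · simpa using Submodule.zero_mem (charSpan n)
    · intro x y _ _ hx hy
      simpa [star_add] using Submodule.add_mem _ hx hy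
    · intro c x _ hx
      simpa [star_smul] using Submodule.smul_mem _ (starRingEnd ℂ c) hx

lemma charAlg_separates : (charAlg n).SeparatesPoints := by
  intro z w hzw
  obtain ⟨i, hi⟩ : ∃ i, z i ≠ w i := by
    by_contra h
    push_neg at h
    exact hzw (funext h)
  refine ⟨_, ⟨chi (Pi.single i 1), Submodule.subset_span ⟨Pi.single i 1, rfl⟩, rfl⟩, ?_⟩
  show chi (Pi.single i 1) z ≠ chi (Pi.single i 1) w
  rw [chi_single, chi_single]
  exact fun h => hi (Circle.coe_injective h)

lemma exists_char_approx (ψ : C((Fin n → Circle), ℂ)) {ε : ℝ} (hε : 0 < ε) :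
    ∃ q ∈ charSpan n, ∀ z, ‖ψ z - q z‖ ≤ ε := by
  have htop := ContinuousMap.starSubalgebra_topologicalClosure_eq_top_of_separatesPoints
    (charAlg n) charAlg_separates
  have hmem : ψ ∈ closure ((charAlg n) : Set C((Fin n → Circle), ℂ)) := by
    have : ψ ∈ (charAlg n).topologicalClosure := htop ▸ trivial
    exact this
  obtain ⟨q, hq, hdist⟩ := Metric.mem_closure_iff.mp hmem ε hε
  refine ⟨q, hq, fun z => ?_⟩
  calc ‖ψ z - q z‖ = dist (ψ z) (q z) := (dist_eq_norm _ _).symm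
    _ ≤ dist ψ q := ContinuousMap.dist_apply_le_dist z
    _ ≤ ε := hdist.le


variable {μT : Measure (Fin n → Circle)} [μT.IsHaarMeasure] [IsProbabilityMeasure μT]

lemma integrable_of_cont {α : Type*} [MeasurableSpace α] [TopologicalSpace α]
    [OpensMeasurableSpace α] [CompactSpace α] [TopologicalSpace.PseudoMetrizableSpace α]
    (μ : Measure α) [IsFiniteMeasure μ] (f : C(α, ℂ)) : Integrable f μ :=
  (integrable_const (‖f‖)).mono' f.continuous.aestronglyMeasurable
    (Eventually.of_forall fun x => f.norm_coe_le_norm x)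

lemma charSpan_tendsto {l : Fin n → ℤ} (hl : l ≠ 0) {q : C((Fin n → Circle), ℂ)}
    (hq : q ∈ charSpan n) :
    Tendsto (fun m : ℕ => ∫ z, chi l z ^ m * q z ∂μT) atTop (𝓝 0) := by
  obtain ⟨i, hi⟩ : ∃ i, l i ≠ 0 := by
    by_contra h; push_neg at h; exact hl (funext fun i => h i)
  refine Submodule.span_induction ?_ ?_ ?_ ?_ hq
  · rintro x ⟨j, rfl⟩
    have hev : ∀ᶠ m : ℕ in atTop, ∫ z, chi l z ^ m * chi j z ∂μT = 0 := by
      filter_upwards [eventually_gt_atTop (j i).natAbs] with m hm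
      have heq : ∀ z, chi l z ^ m * chi j z = chi (m • l + j) z := fun z => by
        rw [chi_pow, chi_mul_apply]
      simp_rw [heq]
      apply integral_chi
      intro h0
      have hcf := congrFun h0 i
      simp only [Pi.add_apply, Pi.smul_apply, smul_eq_mul, Pi.zero_apply] at hcf
      have hcf' : (m:ℤ) * l i + j i = 0 := by simpa [nsmul_eq_mul] using hcf
      have habs : m * (l i).natAbs = (j i).natAbs := by
        have : ((m : ℤ) * l i).natAbs = (j i).natAbs := by
          rw [show (m : ℤ) * l i = -(j i) from by linarith [hcf']]
          exact Int.natAbs_neg _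
        simpa [Int.natAbs_mul] using this
      have h1 : 1 ≤ (l i).natAbs := Nat.one_le_iff_ne_zero.mpr (Int.natAbs_ne_zero.mpr hi)
      nlinarith [hm, habs, h1]
    refine Tendsto.congr' (hev.mono fun m hm => hm.symm) tendsto_const_nhds
  · simpa using (tendsto_const_nhds : Tendsto (fun _ : ℕ => (0:ℂ)) atTop (𝓝 0))
  · intro x y hx hy hx' hy'
    have : ∀ m : ℕ, ∫ z, chi l z ^ m * (x + y) z ∂μT
        = (∫ z, chi l z ^ m * x z ∂μT) + ∫ z, chi l z ^ m * y z ∂μT := by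
      intro m
      have h1 : Integrable (fun z => chi l z ^ m * x z) μT := by
        have := integrable_of_cont μT ((chi l)^m * x)
        simpa [Pi.mul_def, Pi.pow_def] using this
      have h2 : Integrable (fun z => chi l z ^ m * y z) μT := by
        have := integrable_of_cont μT ((chi l)^m * y)
        simpa [Pi.mul_def, Pi.pow_def] using this
      simp_rw [ContinuousMap.add_apply, mul_add]
      exact integral_add h1 h2
    rw [show (0:ℂ) = 0 + 0 from by ring]
    exact Tendsto.congr (fun m => (this m).symm) (hx'.add hy')
  · intro c x hx hx'
    have : ∀ m : ℕ, ∫ z, chi l z ^ m * (c • x) z ∂μT = c * ∫ z, chi l z ^ m * x z ∂μT := by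
      intro m
      simp_rw [ContinuousMap.smul_apply, smul_eq_mul, mul_left_comm _ c]
      exact integral_const_mul c _
    rw [show (0:ℂ) = c * 0 from by ring]
    exact Tendsto.congr (fun m => (this m).symm) (hx'.const_mul c)

lemma tendsto_RL {l : Fin n → ℤ} (hl : l ≠ 0) {φ : (Fin n → Circle) → ℂ}
    (hφ : Integrable φ μT) :
    Tendsto (fun m : ℕ => ∫ z, chi l z ^ m * φ z ∂μT) atTop (𝓝 0) := by
  rw [NormedAddCommGroup.tendsto_nhds_zero]
  intro ε hε
  obtain ⟨ψ, hψap, hψint⟩ := hφ.exists_boundedContinuous_integral_sub_le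
    (by positivity : (0:ℝ) < ε/3)
  obtain ⟨q, hq, hqap⟩ := exists_char_approx ψ.toContinuousMap (by positivity : (0:ℝ) < ε/3)
  have hqint : Integrable q μT := integrable_of_cont μT q
  have hchibdd : ∀ m : ℕ, ∃ C, ∀ z, ‖chi l z ^ m‖ ≤ C := fun m =>
    ⟨1, fun z => by rw [norm_pow, norm_chi, one_pow]⟩
  have hIm : ∀ m : ℕ, Integrable (fun z => chi l z ^ m * φ z) μT := fun m =>
    hφ.bdd_mul (((chi l).continuous.pow m).aestronglyMeasurable) (c := 1)
      (Eventually.of_forall fun z => (by rw [norm_pow, norm_chi, one_pow] : ‖chi l z ^ m‖ ≤ 1))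
  have hCm : ∀ m : ℕ, Integrable (fun z => chi l z ^ m * q z) μT := fun m => by
    simpa [Pi.mul_def, Pi.pow_def] using integrable_of_cont μT ((chi l)^m * q)
  have hdiff : ∀ m : ℕ, ‖(∫ z, chi l z ^ m * φ z ∂μT) - ∫ z, chi l z ^ m * q z ∂μT‖
      ≤ 2*ε/3 := by
    intro m
    rw [← integral_sub (hIm m) (hCm m)]
    have hptw : ∀ z, chi l z ^ m * φ z - chi l z ^ m * q z = chi l z ^ m * (φ z - q z) := by
      intro z; ring
    simp_rw [hptw]
    calc ‖∫ z, chi l z ^ m * (φ z - q z) ∂μT‖ ≤ ∫ z, ‖chi l z ^ m * (φ z - q z)‖ ∂μT :=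
          norm_integral_le_integral_norm _
      _ = ∫ z, ‖φ z - q z‖ ∂μT := by
          congr 1; funext z; rw [norm_mul, norm_pow, norm_chi, one_pow, one_mul]
      _ ≤ ∫ z, (‖φ z - ψ z‖ + ‖ψ z - q z‖) ∂μT := by
          refine integral_mono ((hφ.sub hqint).norm) ?_ ?_
          · exact ((hφ.sub hψint).norm).add ((hψint.sub hqint).norm)
          · intro z
            calc ‖φ z - q z‖ = ‖(φ z - ψ z) + (ψ z - q z)‖ := by ring_nf
              _ ≤ ‖φ z - ψ z‖ + ‖ψ z - q z‖ := norm_add_le _ _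
      _ = (∫ z, ‖φ z - ψ z‖ ∂μT) + ∫ z, ‖ψ z - q z‖ ∂μT :=
          integral_add ((hφ.sub hψint).norm) ((hψint.sub hqint).norm)
      _ ≤ ε/3 + ε/3 := by
          have h2 : ∫ z, ‖ψ z - q z‖ ∂μT ≤ ε/3 :=
            le_trans (integral_mono ((hψint.sub hqint).norm) (integrable_const _)
              (fun z => hqap z)) (by simp)
          exact add_le_add hψap h2
      _ = 2*ε/3 := by ring
  have hqc := charSpan_tendsto (μT := μT) hl hq
  rw [NormedAddCommGroup.tendsto_nhds_zero] at hqc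
  filter_upwards [hqc (ε/3) (by positivity)] with m hm
  calc ‖∫ z, chi l z ^ m * φ z ∂μT‖
      ≤ ‖(∫ z, chi l z ^ m * φ z ∂μT) - ∫ z, chi l z ^ m * q z ∂μT‖
        + ‖∫ z, chi l z ^ m * q z ∂μT‖ := by
          have := norm_add_le ((∫ z, chi l z ^ m * φ z ∂μT) - ∫ z, chi l z ^ m * q z ∂μT)
            (∫ z, chi l z ^ m * q z ∂μT)
          simpa using this
    _ < 2*ε/3 + ε/3 := add_lt_add_of_le_of_lt (hdiff m) hm
    _ = ε := by ring


open scoped NNReal ENNReal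

variable {Ω : Type*} [MeasurableSpace Ω] {P : Measure Ω} [IsProbabilityMeasure P]
  {Z : Ω → Fin n → Circle}

lemma tendsto_nnreal (hZ : Measurable Z) (hac : P.map Z ≪ μT)
    {l : Fin n → ℤ} (hl : l ≠ 0) (u : Ω → ℝ≥0) (hu : Measurable u) (C : ℝ≥0)
    (hub : ∀ ω, u ω ≤ C) :
    Tendsto (fun m : ℕ => ∫ ω, chi l (Z ω) ^ m * ((u ω : ℝ) : ℂ) ∂P) atTop (𝓝 0) := by
  set Q := P.withDensity (fun ω => (u ω : ℝ≥0∞)) with hQdef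
  have hQfin : IsFiniteMeasure Q := by
    constructor
    calc Q Set.univ = ∫⁻ ω, (u ω : ℝ≥0∞) ∂P := by
          rw [withDensity_apply _ MeasurableSet.univ, setLIntegral_univ]
      _ ≤ ∫⁻ _ω, (C : ℝ≥0∞) ∂P := lintegral_mono fun ω => ENNReal.coe_le_coe.mpr (hub ω)
      _ < ⊤ := by simp [lintegral_const]
  have hQZ : Q.map Z ≪ μT := by
    refine Measure.AbsolutelyContinuous.mk fun A hA hA0 => ?_
    have h2 : P (Z ⁻¹' A) = 0 := by
      have h1 : P.map Z A = 0 := hac hA0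
      rwa [Measure.map_apply hZ hA] at h1
    rw [Measure.map_apply hZ hA, withDensity_apply _ (hZ hA)]
    exact setLIntegral_measure_zero _ _ h2
  have hQZfin : IsFiniteMeasure (Q.map Z) := by
    constructor
    rw [Measure.map_apply hZ MeasurableSet.univ]
    exact measure_lt_top Q _
  have hφint : Integrable (fun z => ((Q.map Z).rnDeriv μT z).toReal) μT :=
    Measure.integrable_toReal_rnDeriv
  have hkey : ∀ m : ℕ, ∫ ω, chi l (Z ω) ^ m * ((u ω : ℝ) : ℂ) ∂P
      = ∫ z, chi l z ^ m * ((((Q.map Z).rnDeriv μT z).toReal : ℝ) : ℂ) ∂μT := by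
    intro m
    have e1 : ∫ ω, chi l (Z ω) ^ m * ((u ω : ℝ) : ℂ) ∂P
        = ∫ ω, (u ω : ℝ) • (chi l (Z ω) ^ m) ∂P := by
      congr 1; funext ω; rw [Complex.real_smul, mul_comm]
    have e2 : ∫ ω, (u ω : ℝ) • (chi l (Z ω) ^ m) ∂P = ∫ ω, chi l (Z ω) ^ m ∂Q := by
      rw [hQdef, integral_withDensity_eq_integral_smul hu]
      exact integral_congr_ae (Eventually.of_forall fun ω => (NNReal.smul_def _ _).symm)
    have e3 : ∫ ω, chi l (Z ω) ^ m ∂Q = ∫ z, chi l z ^ m ∂(Q.map Z) :=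
      (integral_map hZ.aemeasurable ((chi l).continuous.pow m).aestronglyMeasurable).symm
    have e4 : ∫ z, chi l z ^ m ∂(Q.map Z)
        = ∫ z, ((Q.map Z).rnDeriv μT z).toReal • (chi l z ^ m) ∂μT :=
      (integral_rnDeriv_smul hQZ).symm
    rw [e1, e2, e3, e4]
    congr 1; funext z; rw [Complex.real_smul, mul_comm]
  rw [show (fun m : ℕ => ∫ ω, chi l (Z ω) ^ m * ((u ω : ℝ) : ℂ) ∂P)
      = fun m : ℕ => ∫ z, chi l z ^ m * ((((Q.map Z).rnDeriv μT z).toReal : ℝ) : ℂ) ∂μT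
    from funext hkey]
  exact tendsto_RL hl hφint.ofReal

lemma integrable_chimul (hZ : Measurable Z) {l : Fin n → ℤ} (m : ℕ) (v : Ω → ℂ)
    (hv : AEStronglyMeasurable v P) (C : ℝ) (hb : ∀ ω, ‖v ω‖ ≤ C) :
    Integrable (fun ω => chi l (Z ω) ^ m * v ω) P :=
  Integrable.bdd_mul ((integrable_const C).mono' hv (Eventually.of_forall hb))
    ((((chi l).continuous.pow m).measurable.comp hZ)).aestronglyMeasurable
    (c := 1) (Eventually.of_forall fun ω => by rw [norm_pow, norm_chi, one_pow])

lemma tendsto_real (hZ : Measurable Z) (hac : P.map Z ≪ μT)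
    {l : Fin n → ℤ} (hl : l ≠ 0) (u : Ω → ℝ) (hu : Measurable u) (C : ℝ)
    (hub : ∀ ω, |u ω| ≤ C) :
    Tendsto (fun m : ℕ => ∫ ω, chi l (Z ω) ^ m * ((u ω : ℝ) : ℂ) ∂P) atTop (𝓝 0) := by
  have h1 := tendsto_nnreal hZ hac hl (fun ω => (u ω).toNNReal)
    (measurable_real_toNNReal.comp hu) C.toNNReal
    (fun ω => Real.toNNReal_le_toNNReal ((abs_le.mp (hub ω)).2))
  have h2 := tendsto_nnreal hZ hac hl (fun ω => (-u ω).toNNReal)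
    (measurable_real_toNNReal.comp hu.neg) C.toNNReal
    (fun ω => Real.toNNReal_le_toNNReal (by have := (abs_le.mp (hub ω)).1; linarith))
  have hint1 : ∀ m : ℕ, Integrable (fun ω => chi l (Z ω) ^ m * (((u ω).toNNReal : ℝ) : ℂ)) P := by
    intro m
    refine integrable_chimul hZ m _ ?_ C (fun ω => ?_)
    · exact (Complex.measurable_ofReal.comp
        ((measurable_real_toNNReal.comp hu).coe_nnreal_real)).aestronglyMeasurable
    · rw [Complex.norm_real, Real.norm_eq_abs, Real.coe_toNNReal', abs_of_nonneg (le_max_right _ _)]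
      exact max_le (le_trans (le_abs_self _) (hub ω)) (le_trans (abs_nonneg _) (hub ω))
  have hint2 : ∀ m : ℕ, Integrable (fun ω => chi l (Z ω) ^ m * (((-u ω).toNNReal : ℝ) : ℂ)) P := by
    intro m
    refine integrable_chimul hZ m _ ?_ C (fun ω => ?_)
    · exact (Complex.measurable_ofReal.comp
        ((measurable_real_toNNReal.comp hu.neg).coe_nnreal_real)).aestronglyMeasurable
    · rw [Complex.norm_real, Real.norm_eq_abs, Real.coe_toNNReal', abs_of_nonneg (le_max_right _ _)]
      refine max_le (le_trans (by rw [← abs_neg]; exact le_abs_self _) (hub ω))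
        (le_trans (abs_nonneg (u ω)) (hub ω))
  have hkey : ∀ m : ℕ, ∫ ω, chi l (Z ω) ^ m * ((u ω : ℝ) : ℂ) ∂P
      = (∫ ω, chi l (Z ω) ^ m * (((u ω).toNNReal : ℝ) : ℂ) ∂P)
        - ∫ ω, chi l (Z ω) ^ m * (((-u ω).toNNReal : ℝ) : ℂ) ∂P := by
    intro m
    rw [← integral_sub (hint1 m) (hint2 m)]
    congr 1; funext ω
    have hr : ((u ω).toNNReal : ℝ) - ((-u ω).toNNReal : ℝ) = u ω := by
      rw [Real.coe_toNNReal', Real.coe_toNNReal']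
      rcases le_total 0 (u ω) with h | h
      · rw [max_eq_left h, max_eq_right (by linarith)]; ring
      · rw [max_eq_right h, max_eq_left (by linarith)]; ring
    calc chi l (Z ω) ^ m * ((u ω : ℝ) : ℂ)
        = chi l (Z ω) ^ m * (((((u ω).toNNReal : ℝ) - ((-u ω).toNNReal : ℝ) : ℝ)) : ℂ) := by
          rw [hr]
      _ = chi l (Z ω) ^ m * (((u ω).toNNReal : ℝ) : ℂ)
          - chi l (Z ω) ^ m * (((-u ω).toNNReal : ℝ) : ℂ) := by push_cast; ring
  rw [show (fun m : ℕ => ∫ ω, chi l (Z ω) ^ m * ((u ω : ℝ) : ℂ) ∂P) = _ from funext hkey]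
  simpa using h1.sub h2

lemma tendsto_cplx (hZ : Measurable Z) (hac : P.map Z ≪ μT)
    {l : Fin n → ℤ} (hl : l ≠ 0) (v : Ω → ℂ) (hv : Measurable v) (C : ℝ)
    (hb : ∀ ω, ‖v ω‖ ≤ C) :
    Tendsto (fun m : ℕ => ∫ ω, chi l (Z ω) ^ m * v ω ∂P) atTop (𝓝 0) := by
  have hre := tendsto_real hZ hac hl (fun ω => (v ω).re) (Complex.measurable_re.comp hv) C
    (fun ω => le_trans (Complex.abs_re_le_norm _) (hb ω))
  have him := tendsto_real hZ hac hl (fun ω => (v ω).im) (Complex.measurable_im.comp hv) C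
    (fun ω => le_trans (Complex.abs_im_le_norm _) (hb ω))
  have hintre : ∀ m : ℕ, Integrable (fun ω => chi l (Z ω) ^ m * (((v ω).re : ℝ) : ℂ)) P :=
    fun m => integrable_chimul hZ m _
      ((Complex.measurable_ofReal.comp (Complex.measurable_re.comp hv)).aestronglyMeasurable) C
      (fun ω => by simpa using le_trans (Complex.abs_re_le_norm _) (hb ω))
  have hintim : ∀ m : ℕ, Integrable (fun ω => chi l (Z ω) ^ m * (((v ω).im : ℝ) : ℂ)) P :=
    fun m => integrable_chimul hZ m _
      ((Complex.measurable_ofReal.comp (Complex.measurable_im.comp hv)).aestronglyMeasurable) C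
      (fun ω => by simpa using le_trans (Complex.abs_im_le_norm _) (hb ω))
  have hkey : ∀ m : ℕ, ∫ ω, chi l (Z ω) ^ m * v ω ∂P
      = (∫ ω, chi l (Z ω) ^ m * (((v ω).re : ℝ) : ℂ) ∂P)
        + (∫ ω, chi l (Z ω) ^ m * (((v ω).im : ℝ) : ℂ) ∂P) * Complex.I := by
    intro m
    rw [← integral_mul_const, ← integral_add (hintre m) ((hintim m).mul_const _)]
    congr 1; funext ω
    nth_rewrite 1 [← Complex.re_add_im (v ω)]
    ring
  rw [show (fun m : ℕ => ∫ ω, chi l (Z ω) ^ m * v ω ∂P) = _ from funext hkey]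
  have := hre.add (him.mul_const Complex.I)
  simpa using this


variable {S : Type*} [MetricSpace S] [CompactSpace S] [MeasurableSpace S] [BorelSpace S]

/-- Product of a continuous function on `S` and a character on the torus. -/
noncomputable def prodChar (g : C(S, ℂ)) (l : Fin n → ℤ) : C(S × (Fin n → Circle), ℂ) :=
  ⟨fun p => g p.1 * chi l p.2,
    (g.continuous.comp continuous_fst).mul ((chi l).continuous.comp continuous_snd)⟩

lemma prodChar_apply (g : C(S, ℂ)) (l : Fin n → ℤ) (p : S × (Fin n → Circle)) :
    prodChar g l p = g p.1 * chi l p.2 := rfl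

lemma prodChar_mul (g g' : C(S, ℂ)) (l l' : Fin n → ℤ) :
    prodChar g l * prodChar g' l' = prodChar (g * g') (l + l') := by
  ext p
  simp only [ContinuousMap.mul_apply, prodChar_apply]
  rw [← chi_mul_apply]
  ring

lemma prodChar_star (g : C(S, ℂ)) (l : Fin n → ℤ) :
    star (prodChar g l) = prodChar (star g) (-l) := by
  ext p
  simp only [ContinuousMap.star_apply, prodChar_apply, star_mul']
  rw [← ContinuousMap.star_apply (chi l) p.2, chi_star]
  try ring
  try rw [mul_comm]

lemma prodChar_one : (prodChar (1 : C(S, ℂ)) (0 : Fin n → ℤ)) = 1 := by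
  ext p
  simp [prodChar_apply, ContinuousMap.congr_fun chi_zero p.2]

/-- The span of product characters. -/
noncomputable def prodSpan (n : ℕ) (S : Type*) [MetricSpace S] [CompactSpace S]
    [MeasurableSpace S] [BorelSpace S] :
    Submodule ℂ C(S × (Fin n → Circle), ℂ) :=
  Submodule.span ℂ (Set.range fun gl : C(S, ℂ) × (Fin n → ℤ) => prodChar gl.1 gl.2)

noncomputable def prodAlg (n : ℕ) (S : Type*) [MetricSpace S] [CompactSpace S]
    [MeasurableSpace S] [BorelSpace S] :
    StarSubalgebra ℂ C(S × (Fin n → Circle), ℂ) where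
  carrier := prodSpan n S
  mul_mem' := by
    open Pointwise in
    intro a b ha hb
    have hsub : (Set.range fun gl : C(S, ℂ) × (Fin n → ℤ) => prodChar gl.1 gl.2)
        * (Set.range fun gl : C(S, ℂ) × (Fin n → ℤ) => prodChar gl.1 gl.2)
        ⊆ (Set.range fun gl : C(S, ℂ) × (Fin n → ℤ) => prodChar gl.1 gl.2) := by
      rintro x ⟨-, ⟨⟨g, l⟩, rfl⟩, -, ⟨⟨g', l'⟩, rfl⟩, rfl⟩
      exact ⟨(g * g', l + l'), (prodChar_mul g g' l l').symm⟩
    have h := Submodule.mul_mem_mul (show a ∈ prodSpan n S from ha)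
      (show b ∈ prodSpan n S from hb)
    rw [prodSpan, Submodule.span_mul_span] at h
    exact Submodule.span_le.mpr (hsub.trans Submodule.subset_span) h
  one_mem' := Submodule.subset_span ⟨(1, 0), prodChar_one⟩
  add_mem' := fun ha hb => Submodule.add_mem _ ha hb
  zero_mem' := Submodule.zero_mem _
  algebraMap_mem' := fun c => by
    have h1 : (1 : C(S × (Fin n → Circle), ℂ)) ∈ prodSpan n S :=
      Submodule.subset_span ⟨(1, 0), prodChar_one⟩
    simpa [Algebra.algebraMap_eq_smul_one] using Submodule.smul_mem _ c h1
  star_mem' := by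
    intro a ha
    refine Submodule.span_induction ?_ ?_ ?_ ?_ ha
    · rintro x ⟨⟨g, l⟩, rfl⟩
      exact Submodule.subset_span ⟨(star g, -l), (prodChar_star g l).symm⟩
    · simpa using Submodule.zero_mem (prodSpan n S)
    · intro x y _ _ hx hy
      simpa [star_add] using Submodule.add_mem _ hx hy
    · intro c x _ hx
      simpa [star_smul] using Submodule.smul_mem _ (starRingEnd ℂ c) hx

lemma prodAlg_separates : (prodAlg n S).SeparatesPoints := by
  intro p q hpq
  by_cases h1 : p.1 = q.1
  · have h2 : p.2 ≠ q.2 := fun h => hpq (Prod.ext h1 h)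
    obtain ⟨i, hi⟩ : ∃ i, p.2 i ≠ q.2 i := by
      by_contra h; push_neg at h; exact h2 (funext h)
    refine ⟨_, ⟨prodChar 1 (Pi.single i 1),
      Submodule.subset_span ⟨(1, Pi.single i 1), rfl⟩, rfl⟩, ?_⟩
    show prodChar 1 (Pi.single i 1) p ≠ prodChar 1 (Pi.single i 1) q
    simp only [prodChar_apply, ContinuousMap.one_apply, one_mul, chi_single]
    exact fun h => hi (Circle.coe_injective h)
  · set gS : C(S, ℂ) := ⟨fun s => ((dist s q.1 : ℝ) : ℂ),
      Complex.continuous_ofReal.comp (continuous_id.dist continuous_const)⟩ with hgS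
    refine ⟨_, ⟨prodChar gS 0, Submodule.subset_span ⟨(gS, 0), rfl⟩, rfl⟩, ?_⟩
    show prodChar gS 0 p ≠ prodChar gS 0 q
    simp only [prodChar_apply, ContinuousMap.congr_fun chi_zero, ContinuousMap.one_apply, mul_one]
    intro h
    have h' : ((dist p.1 q.1 : ℝ) : ℂ) = ((dist q.1 q.1 : ℝ) : ℂ) := h
    have : dist p.1 q.1 = dist q.1 q.1 := by exact_mod_cast h'
    rw [dist_self] at this
    exact h1 (dist_eq_zero.mp this)

lemma exists_prod_approx (ψ : C(S × (Fin n → Circle), ℂ)) {ε : ℝ} (hε : 0 < ε) :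
    ∃ q ∈ prodSpan n S, ∀ p, ‖ψ p - q p‖ ≤ ε := by
  have htop := ContinuousMap.starSubalgebra_topologicalClosure_eq_top_of_separatesPoints
    (prodAlg n S) prodAlg_separates
  have hmem : ψ ∈ closure ((prodAlg n S) : Set C(S × (Fin n → Circle), ℂ)) := by
    have : ψ ∈ (prodAlg n S).topologicalClosure := htop ▸ trivial
    exact this
  obtain ⟨q, hq, hdist⟩ := Metric.mem_closure_iff.mp hmem ε hε
  refine ⟨q, hq, fun p => ?_⟩
  calc ‖ψ p - q p‖ = dist (ψ p) (q p) := (dist_eq_norm _ _).symm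
    _ ≤ dist ψ q := ContinuousMap.dist_apply_le_dist p
    _ ≤ ε := hdist.le


variable {X : Ω → S}

lemma measurable_pow_comp (hZ : Measurable Z) (m : ℕ) :
    Measurable fun ω => (fun i => Z ω i ^ m) :=
  measurable_pi_lambda _ fun i =>
    ((continuous_pow m).measurable.comp ((measurable_pi_apply i).comp hZ))

lemma integrable_comp (hX : Measurable X) (hZ : Measurable Z)
    (q : C(S × (Fin n → Circle), ℂ)) (m : ℕ) :
    Integrable (fun ω => q (X ω, fun i => Z ω i ^ m)) P :=
  (integrable_const ‖q‖).mono'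
    ((q.continuous.measurable.comp (hX.prodMk (measurable_pow_comp hZ m))).aestronglyMeasurable)
    (Eventually.of_forall fun ω => q.norm_coe_le_norm _)

lemma integrable_slice (q : C(S × (Fin n → Circle), ℂ)) (s : S) :
    Integrable (fun y => q (s, y)) μT :=
  (integrable_const ‖q‖).mono' (q.continuous.comp (Continuous.prodMk_right s)).aestronglyMeasurable
    (Eventually.of_forall fun y => q.norm_coe_le_norm _)

lemma cont_param (q : C(S × (Fin n → Circle), ℂ)) :
    Continuous fun s => ∫ y, q (s, y) ∂μT := by
  refine continuous_of_dominated ?_ ?_ (integrable_const ‖q‖) ?_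
  · exact fun s => (q.continuous.comp (Continuous.prodMk_right s)).aestronglyMeasurable
  · exact fun s => Eventually.of_forall fun y => q.norm_coe_le_norm (s, y)
  · exact Eventually.of_forall fun y => q.continuous.comp (continuous_id.prodMk continuous_const)

lemma integrable_param (hX : Measurable X) (q : C(S × (Fin n → Circle), ℂ)) :
    Integrable (fun s => ∫ y, q (s, y) ∂μT) (P.map X) := by
  haveI : IsProbabilityMeasure (P.map X) := Measure.isProbabilityMeasure_map hX.aemeasurable
  refine (integrable_const ‖q‖).mono' (cont_param q).aestronglyMeasurable
    (Eventually.of_forall fun s => ?_)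
  calc ‖∫ y, q (s, y) ∂μT‖ ≤ ∫ y, ‖q (s, y)‖ ∂μT := norm_integral_le_integral_norm _
    _ ≤ ∫ _y, ‖q‖ ∂μT := integral_mono (integrable_slice q s).norm (integrable_const _)
        (fun y => q.norm_coe_le_norm _)
    _ = ‖q‖ := by simp

lemma tendsto_gen (hX : Measurable X) (hZ : Measurable Z) (hac : P.map Z ≪ μT)
    (g : C(S, ℂ)) (l : Fin n → ℤ) :
    Tendsto (fun m : ℕ => ∫ ω, prodChar g l (X ω, fun i => Z ω i ^ m) ∂P) atTop
      (𝓝 (∫ s, ∫ y, prodChar g l (s, y) ∂μT ∂(P.map X))) := by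
  haveI : IsProbabilityMeasure (P.map X) := Measure.isProbabilityMeasure_map hX.aemeasurable
  by_cases hl : l = 0
  · subst hl
    have hconst : ∀ m : ℕ, ∫ ω, prodChar g 0 (X ω, fun i => Z ω i ^ m) ∂P
        = ∫ ω, g (X ω) ∂P := by
      intro m
      congr 1; funext ω
      rw [prodChar_apply]
      simp [ContinuousMap.congr_fun chi_zero]
    have hRHS : ∫ s, ∫ y, prodChar g 0 (s, y) ∂μT ∂(P.map X) = ∫ ω, g (X ω) ∂P := by
      have hinner : ∀ s : S, ∫ y, prodChar g 0 (s, y) ∂μT = g s := by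
        intro s
        simp [prodChar_apply, ContinuousMap.congr_fun chi_zero]
      simp_rw [hinner]
      exact integral_map hX.aemeasurable g.continuous.aestronglyMeasurable
    rw [show (fun m : ℕ => ∫ ω, prodChar g 0 (X ω, fun i => Z ω i ^ m) ∂P) = _ from
      funext hconst, hRHS]
    exact tendsto_const_nhds
  · have hRHS : ∫ s, ∫ y, prodChar g l (s, y) ∂μT ∂(P.map X) = 0 := by
      have hinner : ∀ s : S, ∫ y, prodChar g l (s, y) ∂μT = 0 := by
        intro s
        simp_rw [prodChar_apply]
        rw [integral_const_mul, integral_chi hl, mul_zero]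
      simp_rw [hinner, integral_zero]
    rw [hRHS]
    have h := tendsto_cplx hZ hac hl (fun ω => g (X ω))
      (g.continuous.measurable.comp hX) ‖g‖ (fun ω => g.norm_coe_le_norm _)
    refine Tendsto.congr (fun m => ?_) h
    congr 1; funext ω
    rw [prodChar_apply, chi_powmap, mul_comm]

lemma tendsto_span (hX : Measurable X) (hZ : Measurable Z) (hac : P.map Z ≪ μT)
    {q : C(S × (Fin n → Circle), ℂ)} (hq : q ∈ prodSpan n S) :
    Tendsto (fun m : ℕ => ∫ ω, q (X ω, fun i => Z ω i ^ m) ∂P) atTop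
      (𝓝 (∫ s, ∫ y, q (s, y) ∂μT ∂(P.map X))) := by
  refine Submodule.span_induction ?_ ?_ ?_ ?_ hq
  · rintro x ⟨⟨g, l⟩, rfl⟩
    exact tendsto_gen hX hZ hac g l
  · simpa using (tendsto_const_nhds :
      Tendsto (fun _ : ℕ => (0:ℂ)) atTop (𝓝 0))
  · intro x y _ _ hx hy
    have hL : ∫ s, ∫ u, (x + y) (s, u) ∂μT ∂(P.map X)
        = (∫ s, ∫ u, x (s, u) ∂μT ∂(P.map X)) + ∫ s, ∫ u, y (s, u) ∂μT ∂(P.map X) := by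
      rw [← integral_add (integrable_param hX x) (integrable_param hX y)]
      congr 1; funext s
      rw [← integral_add (integrable_slice x s) (integrable_slice y s)]
      congr 1
    have hI : ∀ m : ℕ, ∫ ω, (x + y) (X ω, fun i => Z ω i ^ m) ∂P
        = (∫ ω, x (X ω, fun i => Z ω i ^ m) ∂P) + ∫ ω, y (X ω, fun i => Z ω i ^ m) ∂P := by
      intro m
      rw [← integral_add (integrable_comp hX hZ x m) (integrable_comp hX hZ y m)]
      congr 1
    rw [show (fun m : ℕ => ∫ ω, (x + y) (X ω, fun i => Z ω i ^ m) ∂P) = _ from funext hI, hL]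
    exact hx.add hy
  · intro c x _ hx
    have hL : ∫ s, ∫ u, (c • x) (s, u) ∂μT ∂(P.map X)
        = c * ∫ s, ∫ u, x (s, u) ∂μT ∂(P.map X) := by
      rw [← integral_const_mul]
      refine integral_congr_ae (Eventually.of_forall fun s => ?_)
      show ∫ u, (c • x) (s, u) ∂μT = c * ∫ u, x (s, u) ∂μT
      rw [← integral_const_mul]
      exact integral_congr_ae (Eventually.of_forall fun u => by simp)
    have hI : ∀ m : ℕ, ∫ ω, (c • x) (X ω, fun i => Z ω i ^ m) ∂P
        = c * ∫ ω, x (X ω, fun i => Z ω i ^ m) ∂P := by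
      intro m
      rw [← integral_const_mul]
      exact integral_congr_ae (Eventually.of_forall fun ω => by simp)
    rw [show (fun m : ℕ => ∫ ω, (c • x) (X ω, fun i => Z ω i ^ m) ∂P) = _ from funext hI, hL]
    exact hx.const_mul c

end PairPower


open PairPower

/-- Let `(X, Z)` be a random pair with values in `S × T`, where `S` is a
compact metric space and `T` is an `n`-torus, and suppose the law of `Z` is absolutely
continuous with respect to Haar measure `μT` on `T`.  Then `(X, Zᵐ)` converges in
distribution, as `m → ∞`, to `(X, Y)`, where `Y` is Haar-distributed on `T` and
independent of `X`; the limit law is expressed by the iterated integral. -/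
theorem pair_with_power_tendsto {n : ℕ}
    {S : Type*} [MetricSpace S] [CompactSpace S] [MeasurableSpace S] [BorelSpace S]
    (μT : Measure (Fin n → Circle)) [μT.IsHaarMeasure] [IsProbabilityMeasure μT]
    {Ω : Type*} [MeasurableSpace Ω] (P : Measure Ω) [IsProbabilityMeasure P]
    (X : Ω → S) (Z : Ω → Fin n → Circle) (hX : Measurable X) (hZ : Measurable Z)
    (hac : P.map Z ≪ μT) :
    ∀ f : BoundedContinuousFunction (S × (Fin n → Circle)) ℝ,
      Tendsto (fun m : ℕ => ∫ ω, f (X ω, fun i => Z ω i ^ m) ∂P) atTop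
        (𝓝 (∫ s, ∫ y, f (s, y) ∂μT ∂(P.map X))) := by
  intro f
  haveI : IsProbabilityMeasure (P.map X) := Measure.isProbabilityMeasure_map hX.aemeasurable
  set fc : C(S × (Fin n → Circle), ℂ) :=
    ⟨fun p => ((f p : ℝ) : ℂ), Complex.continuous_ofReal.comp f.continuous⟩ with hfc
  have hre : ∀ m : ℕ, ∫ ω, f (X ω, fun i => Z ω i ^ m) ∂P
      = (∫ ω, fc (X ω, fun i => Z ω i ^ m) ∂P).re := by
    intro m
    have : ∫ ω, fc (X ω, fun i => Z ω i ^ m) ∂P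
        = ((∫ ω, f (X ω, fun i => Z ω i ^ m) ∂P : ℝ) : ℂ) := integral_ofReal
    rw [this, Complex.ofReal_re]
  have hinnerL : ∀ s, ∫ y, fc (s, y) ∂μT = ((∫ y, f (s, y) ∂μT : ℝ) : ℂ) :=
    fun s => integral_ofReal
  have hL : ∫ s, ∫ y, f (s, y) ∂μT ∂(P.map X)
      = (∫ s, ∫ y, fc (s, y) ∂μT ∂(P.map X)).re := by
    simp_rw [hinnerL]
    have houter : ∫ s, ((∫ y, f (s, y) ∂μT : ℝ) : ℂ) ∂(P.map X)
        = ((∫ s, ∫ y, f (s, y) ∂μT ∂(P.map X) : ℝ) : ℂ) := integral_ofReal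
    rw [houter, Complex.ofReal_re]
  have hmain : Tendsto (fun m : ℕ => ∫ ω, fc (X ω, fun i => Z ω i ^ m) ∂P) atTop
      (𝓝 (∫ s, ∫ y, fc (s, y) ∂μT ∂(P.map X))) := by
    refine Metric.tendsto_nhds.mpr fun ε hε => ?_
    obtain ⟨q, hq, happ⟩ := exists_prod_approx fc (show (0:ℝ) < ε/4 by linarith)
    have h1 : ∀ m : ℕ, ‖(∫ ω, fc (X ω, fun i => Z ω i ^ m) ∂P)
        - ∫ ω, q (X ω, fun i => Z ω i ^ m) ∂P‖ ≤ ε/4 := by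
      intro m
      rw [← integral_sub (integrable_comp hX hZ fc m) (integrable_comp hX hZ q m)]
      calc ‖∫ ω, (fc (X ω, fun i => Z ω i ^ m) - q (X ω, fun i => Z ω i ^ m)) ∂P‖
          ≤ ∫ ω, ‖fc (X ω, fun i => Z ω i ^ m) - q (X ω, fun i => Z ω i ^ m)‖ ∂P :=
            norm_integral_le_integral_norm _
        _ ≤ ∫ _ω, (ε/4) ∂P := integral_mono
            ((integrable_comp hX hZ fc m).sub (integrable_comp hX hZ q m)).norm
            (integrable_const _) (fun ω => happ _)
        _ = ε/4 := by simp
    have hinnerdiff : ∀ s, ‖(∫ y, fc (s, y) ∂μT) - ∫ y, q (s, y) ∂μT‖ ≤ ε/4 := by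
      intro s
      rw [← integral_sub (integrable_slice fc s) (integrable_slice q s)]
      calc ‖∫ y, (fc (s, y) - q (s, y)) ∂μT‖ ≤ ∫ y, ‖fc (s, y) - q (s, y)‖ ∂μT :=
            norm_integral_le_integral_norm _
        _ ≤ ∫ _y, (ε/4) ∂μT := integral_mono
            ((integrable_slice fc s).sub (integrable_slice q s)).norm
            (integrable_const _) (fun y => happ _)
        _ = ε/4 := by simp
    have h2 : ‖(∫ s, ∫ y, fc (s, y) ∂μT ∂(P.map X))
        - ∫ s, ∫ y, q (s, y) ∂μT ∂(P.map X)‖ ≤ ε/4 := by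
      rw [← integral_sub (integrable_param hX fc) (integrable_param hX q)]
      calc ‖∫ s, ((∫ y, fc (s, y) ∂μT) - ∫ y, q (s, y) ∂μT) ∂(P.map X)‖
          ≤ ∫ s, ‖(∫ y, fc (s, y) ∂μT) - ∫ y, q (s, y) ∂μT‖ ∂(P.map X) :=
            norm_integral_le_integral_norm _
        _ ≤ ∫ _s, (ε/4) ∂(P.map X) := integral_mono
            ((integrable_param hX fc).sub (integrable_param hX q)).norm
            (integrable_const _) (fun s => hinnerdiff s)
        _ = ε/4 := by simp
    have h3 := tendsto_span hX hZ hac hq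
    filter_upwards [Metric.tendsto_nhds.mp h3 (ε/4) (by linarith)] with m hm
    have t1 : dist (∫ ω, fc (X ω, fun i => Z ω i ^ m) ∂P)
        (∫ ω, q (X ω, fun i => Z ω i ^ m) ∂P) ≤ ε/4 := by
      rw [dist_eq_norm]; exact h1 m
    have t3 : dist (∫ s, ∫ y, q (s, y) ∂μT ∂(P.map X))
        (∫ s, ∫ y, fc (s, y) ∂μT ∂(P.map X)) ≤ ε/4 := by
      rw [dist_comm, dist_eq_norm]; exact h2
    refine lt_of_le_of_lt (dist_triangle4 _ (∫ ω, q (X ω, fun i => Z ω i ^ m) ∂P)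
      (∫ s, ∫ y, q (s, y) ∂μT ∂(P.map X)) _) ?_
    linarith [hm]
  have hfinal := (Complex.continuous_re.tendsto _).comp hmain
  rw [show (fun m : ℕ => ∫ ω, f (X ω, fun i => Z ω i ^ m) ∂P)
      = fun m : ℕ => (∫ ω, fc (X ω, fun i => Z ω i ^ m) ∂P).re from funext hre, hL]
  exact hfinal
end
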